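/- arXiv:2202.08923 — 3 statements merged into one kernel-verified Lean document; each statement's English description precedes it below -/
import Mathlib

section
/- For k ∈ (0,1) and x ≥ 0, the function g(x) = ω⁻¹ arctan(ωx) − arcsc(x,k) is nonnegative, where ω = π/(2K(k)) and arcsc(x,k) = ∫₀ˣ dt/(√(1+t²)·√(1+k'²t²)) with k' = √(1−k²). -/
/-!
Substituting `t = tan θ` turns both `arcsc x k` and `ω⁻¹ arctan (ω x)` into integrals over
`[0, arctan x]`, of `(1 - k² sin² θ)^(-1/2)` and of `(cos² θ + ω² sin² θ)⁻¹` respectively.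
Over the whole quarter period `[0, π/2]` both integrals equal `K(k)`; this is exactly the choice
`ω = π / (2 K(k))`. Since `(cos² θ + ω² sin² θ)² - (1 - k² sin² θ)` has the sign of
`(1 - ω²)² sin² θ - (2 (1 - ω²) - k²)`, the two integrands cross at most once on `[0, π/2]`,
the second one being the larger before the crossing. Hence the partial integrals of the second
one dominate: before the crossing by pointwise comparison, after it by comparing the tails.
-/

open Real

/-- The complete elliptic integral of the first kind. -/
noncomputable def ellipticK (k : ℝ) : ℝ :=
  ∫ θ in (0:ℝ)..(π/2), (Real.sqrt (1 - k^2 * (Real.sin θ)^2))⁻¹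

/-- The inverse Jacobi sc function: `arcsc(x,k) = ∫₀ˣ dt/(√(1+t²)·√(1+k'²t²))`,
where `k'² = 1 - k²`. -/
noncomputable def arcsc (x k : ℝ) : ℝ :=
  ∫ t in (0:ℝ)..x, (Real.sqrt (1 + t^2) * Real.sqrt (1 + (1 - k^2) * t^2))⁻¹

open Set MeasureTheory

noncomputable def ellipticIntegrand (k θ : ℝ) : ℝ :=
  (√(1 - k ^ 2 * sin θ ^ 2))⁻¹

noncomputable def arctanIntegrand (ω θ : ℝ) : ℝ :=
  (cos θ ^ 2 + ω ^ 2 * sin θ ^ 2)⁻¹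

theorem integral_le_integral_of_sign_change {f g h : ℝ → ℝ} {a b φ τ : ℝ}
    (hf : IntervalIntegrable f volume a b) (hg : IntervalIntegrable g volume a b)
    (hh : MonotoneOn h (Icc a b))
    (hfg : ∀ θ ∈ Icc a b, h θ ≤ τ → f θ ≤ g θ)
    (hgf : ∀ θ ∈ Icc a b, τ ≤ h θ → g θ ≤ f θ)
    (htot : ∫ θ in a..b, f θ = ∫ θ in a..b, g θ) (hφ : φ ∈ Icc a b) :
    ∫ θ in a..φ, f θ ≤ ∫ θ in a..φ, g θ := by
  have hsub₁ : uIcc a φ ⊆ uIcc a b := uIcc_subset_uIcc left_mem_uIcc (Icc_subset_uIcc hφ)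
  have hsub₂ : uIcc φ b ⊆ uIcc a b := uIcc_subset_uIcc (Icc_subset_uIcc hφ) right_mem_uIcc
  rcases le_or_gt (h φ) τ with hτ | hτ
  · refine intervalIntegral.integral_mono_on hφ.1 (hf.mono_set hsub₁) (hg.mono_set hsub₁)
      fun θ hθ => hfg θ ⟨hθ.1, hθ.2.trans hφ.2⟩ ?_
    exact (hh ⟨hθ.1, hθ.2.trans hφ.2⟩ hφ hθ.2).trans hτ
  · have htail : ∫ θ in φ..b, g θ ≤ ∫ θ in φ..b, f θ :=
      intervalIntegral.integral_mono_on hφ.2 (hg.mono_set hsub₂) (hf.mono_set hsub₂)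
        fun θ hθ => hgf θ ⟨hφ.1.trans hθ.1, hθ.2⟩
          (hτ.le.trans (hh hφ ⟨hφ.1.trans hθ.1, hθ.2⟩ hθ.1))
    have hsplit_f := intervalIntegral.integral_add_adjacent_intervals
      (hf.mono_set hsub₁) (hf.mono_set hsub₂)
    have hsplit_g := intervalIntegral.integral_add_adjacent_intervals
      (hg.mono_set hsub₁) (hg.mono_set hsub₂)
    linarith

theorem integral_comp_arctan {E : Type*} [NormedAddCommGroup E] [NormedSpace ℝ E]
    {g : ℝ → E} (hg : Continuous g) (x : ℝ) :
    ∫ θ in (0 : ℝ)..arctan x, g θ = ∫ t in (0 : ℝ)..x, (1 + t ^ 2)⁻¹ • g (arctan t) := by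
  have h := intervalIntegral.integral_deriv_smul_comp (a := 0) (b := x)
    (fun t _ => hasDerivAt_arctan t)
    (continuous_const.div (by fun_prop) fun t => by positivity).continuousOn hg
  rw [arctan_zero] at h
  simpa only [one_div, Function.comp_apply] using h.symm

section Integrands

variable {k ω : ℝ}

theorem one_sub_sq_mul_sin_sq_pos (hk : k ^ 2 < 1) (θ : ℝ) : 0 < 1 - k ^ 2 * sin θ ^ 2 := by
  nlinarith [sin_sq_le_one θ, sq_nonneg (sin θ), sq_nonneg k]

theorem cos_sq_add_mul_sin_sq_pos (hω : ω ≠ 0) (θ : ℝ) : 0 < cos θ ^ 2 + ω ^ 2 * sin θ ^ 2 := by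
  have hω2 : 0 < ω ^ 2 := by positivity
  nlinarith [sin_sq_add_cos_sq θ, sq_nonneg (cos θ), sq_nonneg (ω ^ 2 * sin θ), sq_nonneg (sin θ)]

theorem continuous_ellipticIntegrand (hk : k ^ 2 < 1) : Continuous (ellipticIntegrand k) :=
  Continuous.inv₀ (by fun_prop) fun θ => (sqrt_pos.2 (one_sub_sq_mul_sin_sq_pos hk θ)).ne'

theorem continuous_arctanIntegrand (hω : ω ≠ 0) : Continuous (arctanIntegrand ω) :=
  Continuous.inv₀ (by fun_prop) fun θ => (cos_sq_add_mul_sin_sq_pos hω θ).ne'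

theorem ellipticK_pos (hk : k ^ 2 < 1) : 0 < ellipticK k :=
  intervalIntegral.intervalIntegral_pos_of_pos_on
    ((continuous_ellipticIntegrand hk).intervalIntegrable _ _)
    (fun θ _ => inv_pos.2 (sqrt_pos.2 (one_sub_sq_mul_sin_sq_pos hk θ))) (by positivity)

theorem arcsc_eq_integral_ellipticIntegrand (hk : k ^ 2 < 1) (x : ℝ) :
    arcsc x k = ∫ θ in (0 : ℝ)..arctan x, ellipticIntegrand k θ := by
  rw [integral_comp_arctan (continuous_ellipticIntegrand hk), arcsc]
  congr 1
  ext t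
  have h1 : (0 : ℝ) < 1 + t ^ 2 := by positivity
  have h2 : (0 : ℝ) < 1 + (1 - k ^ 2) * t ^ 2 := by nlinarith [sq_nonneg t]
  have hsin : 1 - k ^ 2 * sin (arctan t) ^ 2 = (1 + (1 - k ^ 2) * t ^ 2) / (1 + t ^ 2) := by
    rw [sin_arctan, div_pow, sq_sqrt h1.le]
    field_simp
    ring
  rw [ellipticIntegrand, hsin, sqrt_div' _ h1.le, smul_eq_mul]
  have : 0 < √(1 + t ^ 2) := sqrt_pos.2 h1
  have : 0 < √(1 + (1 - k ^ 2) * t ^ 2) := sqrt_pos.2 h2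
  field_simp
  rw [sq_sqrt h1.le]

theorem integral_arctanIntegrand_arctan (hω : ω ≠ 0) (x : ℝ) :
    ∫ θ in (0 : ℝ)..arctan x, arctanIntegrand ω θ = ω⁻¹ * arctan (ω * x) := by
  rw [integral_comp_arctan (continuous_arctanIntegrand hω)]
  have hpt : ∀ t : ℝ, (1 + t ^ 2)⁻¹ • arctanIntegrand ω (arctan t) = (1 + (ω * t) ^ 2)⁻¹ := by
    intro t
    have h1 : (0 : ℝ) < 1 + t ^ 2 := by positivity
    rw [arctanIntegrand, cos_sq_arctan, sin_arctan, div_pow, sq_sqrt h1.le, smul_eq_mul]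
    field_simp
  simp_rw [hpt, intervalIntegral.integral_comp_mul_left (fun t => (1 + t ^ 2)⁻¹) hω,
    integral_inv_one_add_sq, mul_zero, arctan_zero, sub_zero, smul_eq_mul]

theorem integral_arctanIntegrand_pi_div_two (hω : 0 < ω) :
    ∫ θ in (0 : ℝ)..π / 2, arctanIntegrand ω θ = ω⁻¹ * (π / 2) := by
  have hprim : Continuous fun b => ∫ θ in (0 : ℝ)..b, arctanIntegrand ω θ :=
    intervalIntegral.continuous_primitive
      (fun _ _ => (continuous_arctanIntegrand hω.ne').intervalIntegrable _ _) 0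
  have hlim_left : Filter.Tendsto (fun x => ∫ θ in (0 : ℝ)..arctan x, arctanIntegrand ω θ)
      Filter.atTop (nhds (∫ θ in (0 : ℝ)..π / 2, arctanIntegrand ω θ)) :=
    (hprim.tendsto _).comp (tendsto_arctan_atTop.mono_right nhdsWithin_le_nhds)
  have hlim_right : Filter.Tendsto (fun x => ω⁻¹ * arctan (ω * x)) Filter.atTop
      (nhds (ω⁻¹ * (π / 2))) :=
    ((tendsto_arctan_atTop.mono_right nhdsWithin_le_nhds).comp
      (Filter.tendsto_id.const_mul_atTop hω)).const_mul _
  simp_rw [integral_arctanIntegrand_arctan hω.ne'] at hlim_left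
  exact tendsto_nhds_unique hlim_left hlim_right

theorem sq_cos_sq_add_mul_sin_sq_sub (θ : ℝ) :
    (cos θ ^ 2 + ω ^ 2 * sin θ ^ 2) ^ 2 - (1 - k ^ 2 * sin θ ^ 2)
      = sin θ ^ 2 * ((1 - ω ^ 2) ^ 2 * sin θ ^ 2 - (2 * (1 - ω ^ 2) - k ^ 2)) := by
  rw [cos_sq']
  ring

theorem ellipticIntegrand_le_arctanIntegrand (hω : ω ≠ 0) {θ : ℝ}
    (hθ : (1 - ω ^ 2) ^ 2 * sin θ ^ 2 ≤ 2 * (1 - ω ^ 2) - k ^ 2) :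
    ellipticIntegrand k θ ≤ arctanIntegrand ω θ := by
  refine inv_anti₀ (cos_sq_add_mul_sin_sq_pos hω θ) (le_sqrt_of_sq_le ?_)
  nlinarith [sq_cos_sq_add_mul_sin_sq_sub (k := k) (ω := ω) θ,
    mul_nonneg (sq_nonneg (sin θ)) (sub_nonneg.2 hθ)]

theorem arctanIntegrand_le_ellipticIntegrand (hk : k ^ 2 < 1) {θ : ℝ}
    (hθ : 2 * (1 - ω ^ 2) - k ^ 2 ≤ (1 - ω ^ 2) ^ 2 * sin θ ^ 2) :
    arctanIntegrand ω θ ≤ ellipticIntegrand k θ := by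
  refine inv_anti₀ (sqrt_pos.2 (one_sub_sq_mul_sin_sq_pos hk θ)) ((sqrt_le_left ?_).2 ?_)
  · positivity
  · nlinarith [sq_cos_sq_add_mul_sin_sq_sub (k := k) (ω := ω) θ,
      mul_nonneg (sq_nonneg (sin θ)) (sub_nonneg.2 hθ)]

end Integrands

theorem monotoneOn_sin_sq : MonotoneOn (fun θ => sin θ ^ 2) (Icc 0 (π / 2)) :=
  fun _ hθ₁ _ hθ₂ hle =>
    pow_le_pow_left₀ (sin_nonneg_of_nonneg_of_le_pi hθ₁.1 (by linarith [hθ₁.2, pi_pos]))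
      (sin_le_sin_of_le_of_le_pi_div_two (by linarith [hθ₁.1, pi_pos]) hθ₂.2 hle) 2

/-- For `k ∈ (0,1)` and `x ≥ 0`, the function
`g(x) = ω⁻¹ arctan(ωx) − arcsc(x,k)` is nonnegative, where `ω = π/(2K(k))`. -/
theorem stmt1 (k : ℝ) (hk : k ∈ Set.Ioo (0:ℝ) 1) (x : ℝ) (hx : 0 ≤ x) :
    0 ≤ (π / (2 * ellipticK k))⁻¹ * Real.arctan ((π / (2 * ellipticK k)) * x)
        - arcsc x k := by
  have hk2 : k ^ 2 < 1 := by nlinarith [hk.1, hk.2]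
  have hK := ellipticK_pos hk2
  set ω := π / (2 * ellipticK k)
  have hω : 0 < ω := by positivity
  rw [arcsc_eq_integral_ellipticIntegrand hk2, ← integral_arctanIntegrand_arctan hω.ne',
    sub_nonneg]
  refine integral_le_integral_of_sign_change (h := fun θ => (1 - ω ^ 2) ^ 2 * sin θ ^ 2)
    (τ := 2 * (1 - ω ^ 2) - k ^ 2) (b := π / 2)
    ((continuous_ellipticIntegrand hk2).intervalIntegrable _ _)
    ((continuous_arctanIntegrand hω.ne').intervalIntegrable _ _)
    (fun _ hθ₁ _ hθ₂ hle =>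
      mul_le_mul_of_nonneg_left (monotoneOn_sin_sq hθ₁ hθ₂ hle) (sq_nonneg _))
    (fun _ _ => ellipticIntegrand_le_arctanIntegrand hω.ne')
    (fun _ _ => arctanIntegrand_le_ellipticIntegrand hk2) ?_
    ⟨arctan_nonneg.2 hx, (arctan_lt_pi_div_two x).le⟩
  change ellipticK k = _
  rw [integral_arctanIntegrand_pi_div_two hω, inv_div]
  field_simp
end

section
/- Let q : [0,b] → ℝ be continuous with q(t) ≥ 0 on [0,b] and q(t) ≥ λ² on [c,b] for some λ > 0 and c ∈ [0,b). Let u solve u'' = q·u on [0,b] with initial conditions u(0)=1, u'(0)=0 (or u(0)=0, u'(0)=1). Then u(t) > 0 and u'(t) ≥ 0 for t ∈ (0,b], and u(t)/u(b) ≤ 2·e^{−λ(b−c)} for all t ∈ [0,c]. -/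
/-!
Positivity follows by continuous induction: as long as `u ≥ 0`, the equation gives `u'' = q u ≥ 0`,
so `u'` and then `u` can only grow from their nonnegative initial values.
For the decay estimate compare `u` on `[c, b]` with `v t = cosh (λ (t - c))`, which solves
`v'' = λ² v`: the Wronskian `u' v - u v'` has derivative `(q - λ²) u v ≥ 0` and starts at
`u'(c) ≥ 0`, so `u / v` is nondecreasing and `u b ≥ u c · cosh (λ (b - c)) ≥ u c · e^{λ (b - c)} / 2`.
Finally `u t ≤ u c` for `t ≤ c` because `u` is nondecreasing.
-/

open Set Real

theorem monotoneOn_Icc_of_hasDerivAt_nonneg {a b : ℝ} {f f' : ℝ → ℝ}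
    (hf : ∀ t ∈ Icc a b, HasDerivAt f (f' t) t) (hf' : ∀ t ∈ Ioo a b, 0 ≤ f' t) :
    MonotoneOn f (Icc a b) := by
  refine monotoneOn_of_deriv_nonneg (convex_Icc a b)
    (fun t ht => (hf t ht).continuousAt.continuousWithinAt) ?_ ?_ <;>
    intro t ht <;> rw [interior_Icc] at ht
  · exact (hf t (Ioo_subset_Icc_self ht)).differentiableAt.differentiableWithinAt
  · rw [(hf t (Ioo_subset_Icc_self ht)).deriv]
    exact hf' t ht

theorem strictMonoOn_Icc_of_hasDerivAt_pos {a b : ℝ} {f f' : ℝ → ℝ}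
    (hf : ∀ t ∈ Icc a b, HasDerivAt f (f' t) t) (hf' : ∀ t ∈ Ioo a b, 0 < f' t) :
    StrictMonoOn f (Icc a b) := by
  refine strictMonoOn_of_deriv_pos (convex_Icc a b)
    (fun t ht => (hf t ht).continuousAt.continuousWithinAt) fun t ht => ?_
  rw [interior_Icc] at ht
  rw [(hf t (Ioo_subset_Icc_self ht)).deriv]
  exact hf' t ht

theorem forall_mem_Icc_pos_of_induction {a b : ℝ} {f : ℝ → ℝ} (hf : ContinuousOn f (Icc a b))
    (ha : 0 < f a) (hstep : ∀ t ∈ Ioc a b, (∀ s ∈ Ico a t, 0 < f s) → 0 < f t) :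
    ∀ t ∈ Icc a b, 0 < f t := by
  by_contra! hneg
  obtain ⟨t₁, ht₁, hft₁⟩ := hneg
  set Z := Icc a b ∩ f ⁻¹' Iic 0
  have hZbdd : BddBelow Z := ⟨a, fun z hz => hz.1.1⟩
  have ht₀ : sInf Z ∈ Z :=
    (hf.preimage_isClosed_of_isClosed isClosed_Icc isClosed_Iic).csInf_mem ⟨t₁, ht₁, hft₁⟩ hZbdd
  have ht₀a : a < sInf Z := by
    refine ht₀.1.1.lt_of_ne fun h => ?_
    have : f (sInf Z) ≤ 0 := ht₀.2
    rw [← h] at this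
    linarith
  have hbefore : ∀ s ∈ Ico a (sInf Z), 0 < f s := fun s hs => by
    by_contra! hfs
    exact (csInf_le hZbdd ⟨⟨hs.1, hs.2.le.trans ht₀.1.2⟩, hfs⟩).not_gt hs.2
  exact (hstep _ ⟨ht₀a, ht₀.1.2⟩ hbefore).not_ge ht₀.2

section SecondOrder

variable {a b : ℝ} {p q u u' : ℝ → ℝ}

theorem monotoneOn_deriv_of_nonneg (hu2 : ∀ t ∈ Icc a b, HasDerivAt u' (q t * u t) t)
    (hq : ∀ t ∈ Ioo a b, 0 ≤ q t) (hu : ∀ t ∈ Ioo a b, 0 ≤ u t) : MonotoneOn u' (Icc a b) :=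
  monotoneOn_Icc_of_hasDerivAt_nonneg hu2 fun t ht => mul_nonneg (hq t ht) (hu t ht)

variable (hu1 : ∀ t ∈ Icc a b, HasDerivAt u (u' t) t)
  (hu2 : ∀ t ∈ Icc a b, HasDerivAt u' (q t * u t) t)
include hu1 hu2

theorem pos_of_pos_of_deriv_nonneg (hq : ∀ t ∈ Icc a b, 0 ≤ q t) (hua : 0 < u a)
    (hu'a : 0 ≤ u' a) : ∀ t ∈ Icc a b, 0 < u t := by
  refine forall_mem_Icc_pos_of_induction (fun t ht => (hu1 t ht).continuousAt.continuousWithinAt)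
    hua fun t ht hbefore => ?_
  have hsub : Icc a t ⊆ Icc a b := Icc_subset_Icc_right ht.2
  have hat : a ∈ Icc a t := left_mem_Icc.2 ht.1.le
  have hu'mono : MonotoneOn u' (Icc a t) :=
    monotoneOn_deriv_of_nonneg (fun s hs => hu2 s (hsub hs))
      (fun s hs => hq s (hsub (Ioo_subset_Icc_self hs)))
      (fun s hs => (hbefore s (Ioo_subset_Ico_self hs)).le)
  have humono : MonotoneOn u (Icc a t) :=
    monotoneOn_Icc_of_hasDerivAt_nonneg (fun s hs => hu1 s (hsub hs)) fun s hs =>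
      hu'a.trans (hu'mono hat (Ioo_subset_Icc_self hs) hs.1.le)
  exact hua.trans_le (humono hat (right_mem_Icc.2 ht.1.le) ht.1.le)

theorem deriv_pos_of_nonneg_of_deriv_pos (hq : ∀ t ∈ Icc a b, 0 ≤ q t) (hua : 0 ≤ u a)
    (hu'a : 0 < u' a) : ∀ t ∈ Icc a b, 0 < u' t := by
  refine forall_mem_Icc_pos_of_induction (fun t ht => (hu2 t ht).continuousAt.continuousWithinAt)
    hu'a fun t ht hbefore => ?_
  have hsub : Icc a t ⊆ Icc a b := Icc_subset_Icc_right ht.2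
  have hat : a ∈ Icc a t := left_mem_Icc.2 ht.1.le
  have humono : MonotoneOn u (Icc a t) :=
    monotoneOn_Icc_of_hasDerivAt_nonneg (fun s hs => hu1 s (hsub hs))
      fun s hs => (hbefore s (Ioo_subset_Ico_self hs)).le
  have hu'mono : MonotoneOn u' (Icc a t) :=
    monotoneOn_deriv_of_nonneg (fun s hs => hu2 s (hsub hs))
      (fun s hs => hq s (hsub (Ioo_subset_Icc_self hs)))
      (fun s hs => hua.trans (humono hat (Ioo_subset_Icc_self hs) hs.1.le))
  exact hu'a.trans_le (hu'mono hat (right_mem_Icc.2 ht.1.le) ht.1.le)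

theorem deriv_nonneg_and_pos_of_init (hq : ∀ t ∈ Icc a b, 0 ≤ q t)
    (hinit : (0 < u a ∧ 0 ≤ u' a) ∨ (0 ≤ u a ∧ 0 < u' a)) :
    (∀ t ∈ Icc a b, 0 ≤ u' t) ∧ ∀ t ∈ Ioc a b, 0 < u t := by
  rcases hinit with ⟨hua, hu'a⟩ | ⟨hua, hu'a⟩
  · have hpos := pos_of_pos_of_deriv_nonneg hu1 hu2 hq hua hu'a
    have hu'mono : MonotoneOn u' (Icc a b) :=
      monotoneOn_deriv_of_nonneg hu2 (fun t ht => hq t (Ioo_subset_Icc_self ht))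
        fun t ht => (hpos t (Ioo_subset_Icc_self ht)).le
    refine ⟨fun t ht => hu'a.trans (hu'mono (left_mem_Icc.2 (ht.1.trans ht.2)) ht ht.1),
      fun t ht => hpos t (Ioc_subset_Icc_self ht)⟩
  · have hpos := deriv_pos_of_nonneg_of_deriv_pos hu1 hu2 hq hua hu'a
    have humono : StrictMonoOn u (Icc a b) :=
      strictMonoOn_Icc_of_hasDerivAt_pos hu1 fun t ht => hpos t (Ioo_subset_Icc_self ht)
    exact ⟨fun t ht => (hpos t ht).le, fun t ht =>
      hua.trans_lt (humono (left_mem_Icc.2 (ht.1.le.trans ht.2)) (Ioc_subset_Icc_self ht) ht.1)⟩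

theorem monotoneOn_wronskian {v v' : ℝ → ℝ} (hv1 : ∀ t ∈ Icc a b, HasDerivAt v (v' t) t)
    (hv2 : ∀ t ∈ Icc a b, HasDerivAt v' (p t * v t) t) (hv : ∀ t ∈ Ioo a b, 0 ≤ v t)
    (hpq : ∀ t ∈ Ioo a b, p t * u t ≤ q t * u t) :
    MonotoneOn (fun t => u' t * v t - u t * v' t) (Icc a b) := by
  refine monotoneOn_Icc_of_hasDerivAt_nonneg (f' := fun t => (q t * u t - p t * u t) * v t)
    (fun t ht => ?_) fun t ht => mul_nonneg (sub_nonneg.2 (hpq t ht)) (hv t ht)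
  exact (((hu2 t ht).mul (hv1 t ht)).sub ((hu1 t ht).mul (hv2 t ht))).congr_deriv (by ring)

theorem monotoneOn_div_of_wronskian_nonneg {v v' : ℝ → ℝ}
    (hv1 : ∀ t ∈ Icc a b, HasDerivAt v (v' t) t) (hv2 : ∀ t ∈ Icc a b, HasDerivAt v' (p t * v t) t)
    (hv : ∀ t ∈ Icc a b, 0 < v t) (hpq : ∀ t ∈ Ioo a b, p t * u t ≤ q t * u t)
    (hW : u a * v' a ≤ u' a * v a) : MonotoneOn (fun t => u t / v t) (Icc a b) := by
  have hWmono := monotoneOn_wronskian hu1 hu2 hv1 hv2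
    (fun t ht => (hv t (Ioo_subset_Icc_self ht)).le) hpq
  refine monotoneOn_Icc_of_hasDerivAt_nonneg (fun t ht => (hu1 t ht).div (hv1 t ht) (hv t ht).ne')
    fun t ht => div_nonneg ?_ (sq_nonneg _)
  have := hWmono (left_mem_Icc.2 (ht.1.le.trans ht.2.le)) (Ioo_subset_Icc_self ht) ht.1.le
  simp only at this
  linarith

theorem mul_cosh_le_of_sq_le (lam : ℝ) (hab : a ≤ b) (hq : ∀ t ∈ Ioo a b, lam ^ 2 ≤ q t)
    (hu : ∀ t ∈ Ioo a b, 0 ≤ u t) (hu'a : 0 ≤ u' a) : u a * cosh (lam * (b - a)) ≤ u b := by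
  have hv1 (t : ℝ) : HasDerivAt (fun t => cosh (lam * (t - a))) (lam * sinh (lam * (t - a))) t :=
    (((hasDerivAt_id t).sub_const a).const_mul lam).cosh.congr_deriv (by simp [mul_comm])
  have hv2 (t : ℝ) : HasDerivAt (fun t => lam * sinh (lam * (t - a)))
      (lam ^ 2 * cosh (lam * (t - a))) t :=
    ((((hasDerivAt_id t).sub_const a).const_mul lam).sinh.const_mul lam).congr_deriv
      (by simp; ring)
  have hmono := monotoneOn_div_of_wronskian_nonneg hu1 hu2 (fun t _ => hv1 t) (fun t _ => hv2 t)
    (fun t _ => cosh_pos _) (fun t ht => mul_le_mul_of_nonneg_right (hq t ht) (hu t ht))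
    (by simpa using hu'a)
  have := hmono (left_mem_Icc.2 hab) (right_mem_Icc.2 hab) hab
  simp only [sub_self, mul_zero, cosh_zero, div_one] at this
  rwa [le_div_iff₀ (cosh_pos _)] at this

end SecondOrder

theorem inv_cosh_le_two_mul_exp_neg (x : ℝ) : (cosh x)⁻¹ ≤ 2 * exp (-x) := by
  have h : exp (-x) * exp x = 1 := by rw [← exp_add, neg_add_cancel, exp_zero]
  rw [inv_le_iff_one_le_mul₀ (cosh_pos x), cosh_eq]
  nlinarith [sq_nonneg (exp (-x))]

theorem stmt5_general (b c lam : ℝ) (hc : c ∈ Set.Ico 0 b)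
    (q u u' : ℝ → ℝ)
    (hq0 : ∀ t ∈ Set.Icc 0 b, 0 ≤ q t)
    (hqc : ∀ t ∈ Set.Icc c b, lam^2 ≤ q t)
    (hu1 : ∀ t ∈ Set.Icc 0 b, HasDerivAt u (u' t) t)
    (hu2 : ∀ t ∈ Set.Icc 0 b, HasDerivAt u' (q t * u t) t)
    (hinit : (u 0 = 1 ∧ u' 0 = 0) ∨ (u 0 = 0 ∧ u' 0 = 1)) :
    (∀ t ∈ Set.Ioc 0 b, 0 < u t ∧ 0 ≤ u' t) ∧
    (∀ t ∈ Set.Icc 0 c, u t / u b ≤ 2 * Real.exp (-lam * (b - c))) := by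
  obtain ⟨hc0, hcb⟩ := hc
  obtain ⟨hu'nonneg, hupos⟩ := deriv_nonneg_and_pos_of_init hu1 hu2 hq0 <| by
    rcases hinit with ⟨h, h'⟩ | ⟨h, h'⟩ <;> simp [h, h']
  have hsub : Icc c b ⊆ Icc 0 b := Icc_subset_Icc_left hc0
  have hcosh : u c * cosh (lam * (b - c)) ≤ u b :=
    mul_cosh_le_of_sq_le (fun t ht => hu1 t (hsub ht)) (fun t ht => hu2 t (hsub ht)) lam hcb.le
      (fun t ht => hqc t (Ioo_subset_Icc_self ht))
      (fun t ht => (hupos t ⟨hc0.trans_lt ht.1, ht.2.le⟩).le) (hu'nonneg c ⟨hc0, hcb.le⟩)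
  have humono : MonotoneOn u (Icc 0 b) :=
    monotoneOn_Icc_of_hasDerivAt_nonneg hu1 fun t ht => hu'nonneg t (Ioo_subset_Icc_self ht)
  have hub : 0 < u b := hupos b ⟨hc0.trans_lt hcb, le_rfl⟩
  refine ⟨fun t ht => ⟨hupos t ht, hu'nonneg t (Ioc_subset_Icc_self ht)⟩, fun t ht => ?_⟩
  calc u t / u b ≤ u c / u b :=
        div_le_div_of_nonneg_right (humono ⟨ht.1, ht.2.trans hcb.le⟩ ⟨hc0, hcb.le⟩ ht.2) hub.le
    _ ≤ (cosh (lam * (b - c)))⁻¹ := by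
        rw [div_le_iff₀ hub, ← div_eq_inv_mul, le_div_iff₀ (cosh_pos _)]
        exact hcosh
    _ ≤ 2 * exp (-lam * (b - c)) := by
        rw [neg_mul]
        exact inv_cosh_le_two_mul_exp_neg _

/-- Let `q : [0,b] → ℝ` be continuous with `q ≥ 0` on `[0,b]` and `q ≥ λ²` on `[c,b]`
for some `λ > 0` and `c ∈ [0,b)`.  If `u` solves `u'' = q·u` on `[0,b]` with
`u(0) = 1, u'(0) = 0` or `u(0) = 0, u'(0) = 1`, then `u(t) > 0` and `u'(t) ≥ 0`
for `t ∈ (0,b]`, and `u(t)/u(b) ≤ 2·exp(−λ(b−c))` for all `t ∈ [0,c]`. -/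
theorem stmt5 (b c lam : ℝ) (hb : 0 < b) (hc : c ∈ Set.Ico 0 b) (hlam : 0 < lam)
    (q u u' : ℝ → ℝ)
    (hq : ContinuousOn q (Set.Icc 0 b))
    (hq0 : ∀ t ∈ Set.Icc 0 b, 0 ≤ q t)
    (hqc : ∀ t ∈ Set.Icc c b, lam^2 ≤ q t)
    (hu1 : ∀ t ∈ Set.Icc 0 b, HasDerivAt u (u' t) t)
    (hu2 : ∀ t ∈ Set.Icc 0 b, HasDerivAt u' (q t * u t) t)
    (hinit : (u 0 = 1 ∧ u' 0 = 0) ∨ (u 0 = 0 ∧ u' 0 = 1)) :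
    (∀ t ∈ Set.Ioc 0 b, 0 < u t ∧ 0 ≤ u' t) ∧
    (∀ t ∈ Set.Icc 0 c, u t / u b ≤ 2 * Real.exp (-lam * (b - c))) :=
  stmt5_general b c lam hc q u u' hq0 hqc hu1 hu2 hinit
end

section
/- Let s, t ∈ ℝ with s ∈ (0,2K), t ∈ (−K',K'), k ∈ (0,1), and define R = k'·cn(t,k') / (k·cn(s,k) + dn(s,k)·dn(t,k')) and z = k·k'·sn(s,k)·sn(t,k') / (k·cn(s,k) + dn(s,k)·dn(t,k')). Then the map (s,t) ↦ 2K − s corresponds to inversion at the unit circle: if R̃, z̃ are obtained by replacing s with 2K−s, then (R̃, z̃) = (R, z)/(R² + z²). -/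
/-!
Write `D = k cn s + dn s dn' t` and `D̃ = -k cn s + dn s dn' t` for the denominators at `s` and
at `2K − s`. The Pythagorean identities for `sn, cn, dn` give
`D D̃ = dn² dn'² − k² cn² = k'² (cn'² + k² sn² sn'²)`, and the right side is `D² (R² + z²)`.
Hence `R² + z² = D̃ / D`, and dividing `R` and `z` by it turns their denominator `D` into `D̃`.
-/

open Real

section FlatRing

variable {k kc a c d p q r : ℝ}

theorem flatRing_denom_mul_denom_reflect (ha : a ^ 2 + c ^ 2 = 1) (hd : d ^ 2 = 1 - k ^ 2 * a ^ 2)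
    (hp : p ^ 2 + q ^ 2 = 1) (hr : r ^ 2 = 1 - (1 - k ^ 2) * p ^ 2) :
    (k * c + d * r) * (k * -c + d * r) = (1 - k ^ 2) * (q ^ 2 + k ^ 2 * a ^ 2 * p ^ 2) := by
  linear_combination r ^ 2 * hd + (1 - k ^ 2 * a ^ 2) * hr - k ^ 2 * ha - (1 - k ^ 2) * hp

theorem flatRing_sq_add_sq (hkc : kc ^ 2 = 1 - k ^ 2) (ha : a ^ 2 + c ^ 2 = 1)
    (hd : d ^ 2 = 1 - k ^ 2 * a ^ 2) (hp : p ^ 2 + q ^ 2 = 1)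
    (hr : r ^ 2 = 1 - (1 - k ^ 2) * p ^ 2) (hD : k * c + d * r ≠ 0) :
    (kc * q / (k * c + d * r)) ^ 2 + (k * kc * a * p / (k * c + d * r)) ^ 2 =
      (k * -c + d * r) / (k * c + d * r) := by
  rw [div_pow, div_pow, ← add_div, div_eq_div_iff (pow_ne_zero 2 hD) hD]
  linear_combination (q ^ 2 + k ^ 2 * a ^ 2 * p ^ 2) * (k * c + d * r) * hkc -
    (k * c + d * r) * flatRing_denom_mul_denom_reflect ha hd hp hr

end FlatRing

theorem stmt15_general (k K s t : ℝ) (hk : k ∈ Set.Ioo (0:ℝ) 1)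
    (snk cnk dnk snk' cnk' dnk' : ℝ → ℝ)
    (hpythk : ∀ x, (snk x)^2 + (cnk x)^2 = 1)
    (hdnk : ∀ x, (dnk x)^2 = 1 - k^2 * (snk x)^2)
    (hpythk' : ∀ x, (snk' x)^2 + (cnk' x)^2 = 1)
    (hdnk' : ∀ x, (dnk' x)^2 = 1 - (1 - k^2) * (snk' x)^2)
    (hsnref : snk (2*K - s) = snk s)
    (hcnref : cnk (2*K - s) = -cnk s)
    (hdnref : dnk (2*K - s) = dnk s)
    (R z Rt zt : ℝ)
    (hR : R = Real.sqrt (1 - k^2) * cnk' t / (k * cnk s + dnk s * dnk' t))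
    (hz : z = k * Real.sqrt (1 - k^2) * snk s * snk' t / (k * cnk s + dnk s * dnk' t))
    (hRt : Rt = Real.sqrt (1 - k^2) * cnk' t / (k * cnk (2*K - s) + dnk (2*K - s) * dnk' t))
    (hzt : zt = k * Real.sqrt (1 - k^2) * snk (2*K - s) * snk' t /
      (k * cnk (2*K - s) + dnk (2*K - s) * dnk' t))
    (hD : k * cnk s + dnk s * dnk' t ≠ 0) :
    Rt = R / (R^2 + z^2) ∧ zt = z / (R^2 + z^2) := by
  have hkc : Real.sqrt (1 - k ^ 2) ^ 2 = 1 - k ^ 2 :=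
    Real.sq_sqrt (by nlinarith [hk.1, hk.2])
  have hsum : R ^ 2 + z ^ 2 = (k * -cnk s + dnk s * dnk' t) / (k * cnk s + dnk s * dnk' t) := by
    rw [hR, hz]
    exact flatRing_sq_add_sq hkc (hpythk s) (hdnk s) (hpythk' t) (hdnk' t) hD
  rw [hRt, hzt, hsnref, hcnref, hdnref, hsum, hR, hz]
  exact ⟨(div_div_div_cancel_right₀ hD _ _).symm, (div_div_div_cancel_right₀ hD _ _).symm⟩

/-- In flat-ring coordinates, the map `s ↦ 2K − s` corresponds to inversion at the
unit circle.  Here `snk, cnk, dnk` (resp. `snk', cnk', dnk'`) are the Jacobi elliptic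
functions with modulus `k` (resp. complementary modulus `k' = √(1−k²)`), characterized
by the fundamental identities `sn² + cn² = 1`, `dn² = 1 − (modulus)²·sn²`, and the
reflection identities `sn(2K−s) = sn s`, `cn(2K−s) = −cn s`, `dn(2K−s) = dn s`.
With `R = k'·cn(t,k')/(k·cn(s,k) + dn(s,k)·dn(t,k'))` and
`z = k·k'·sn(s,k)·sn(t,k')/(k·cn(s,k) + dn(s,k)·dn(t,k'))`, and `R̃, z̃` obtained by
replacing `s` with `2K−s`, one has `(R̃, z̃) = (R, z)/(R² + z²)`. -/
theorem stmt15 (k K Kc s t : ℝ) (hk : k ∈ Set.Ioo (0:ℝ) 1)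
    (hs : s ∈ Set.Ioo 0 (2*K)) (ht : t ∈ Set.Ioo (-Kc) Kc)
    (snk cnk dnk snk' cnk' dnk' : ℝ → ℝ)
    (hpythk : ∀ x, (snk x)^2 + (cnk x)^2 = 1)
    (hdnk : ∀ x, (dnk x)^2 = 1 - k^2 * (snk x)^2)
    (hpythk' : ∀ x, (snk' x)^2 + (cnk' x)^2 = 1)
    (hdnk' : ∀ x, (dnk' x)^2 = 1 - (1 - k^2) * (snk' x)^2)
    (hsnref : snk (2*K - s) = snk s)
    (hcnref : cnk (2*K - s) = -cnk s)
    (hdnref : dnk (2*K - s) = dnk s)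
    (R z Rt zt : ℝ)
    (hR : R = Real.sqrt (1 - k^2) * cnk' t / (k * cnk s + dnk s * dnk' t))
    (hz : z = k * Real.sqrt (1 - k^2) * snk s * snk' t / (k * cnk s + dnk s * dnk' t))
    (hRt : Rt = Real.sqrt (1 - k^2) * cnk' t / (k * cnk (2*K - s) + dnk (2*K - s) * dnk' t))
    (hzt : zt = k * Real.sqrt (1 - k^2) * snk (2*K - s) * snk' t /
      (k * cnk (2*K - s) + dnk (2*K - s) * dnk' t))
    (hD : k * cnk s + dnk s * dnk' t ≠ 0)
    (hDt : k * cnk (2*K - s) + dnk (2*K - s) * dnk' t ≠ 0)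
    (hnz : R^2 + z^2 ≠ 0) :
    Rt = R / (R^2 + z^2) ∧ zt = z / (R^2 + z^2) :=
  stmt15_general k K s t hk snk cnk dnk snk' cnk' dnk' hpythk hdnk hpythk' hdnk' hsnref hcnref
    hdnref R z Rt zt hR hz hRt hzt hD
end
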